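/- For every A ⊆ {1,…,n}, the Casimir operator C_A commutes with the full Laplace–Dunkl operator: [C_A, Δ_{[n]}] = 0 as operators on ℝ[x_1,…,x_n], where [n] = {1,…,n}. -/

import Mathlib

open MvPolynomial Finset

noncomputable section

variable {n : ℕ}

/-- Reflection operator `r_i`. -/
def reflOp (i : Fin n) : Module.End ℝ (MvPolynomial (Fin n) ℝ) :=
  (MvPolynomial.aeval (fun j : Fin n => if j = i then -X i else X j)).toLinearMap

/-- Division by the variable `x_i` (as a linear operator, discarding non-divisible terms). -/
def divXop (i : Fin n) : Module.End ℝ (MvPolynomial (Fin n) ℝ) where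
  toFun p := p.divMonomial (Finsupp.single i 1)
  map_add' p q := by ext m; simp [coeff_divMonomial]
  map_smul' c p := by ext m; simp [coeff_divMonomial]

/-- The `i`-th `Z_2^n` Dunkl operator `T_i = ∂_i + μ_i x_i⁻¹ (1 - r_i)`. -/
def dunklT (μ : Fin n → ℝ) (i : Fin n) : Module.End ℝ (MvPolynomial (Fin n) ℝ) :=
  (pderiv i).toLinearMap + μ i • (divXop i * (1 - reflOp i))

/-- The intermediate Laplace–Dunkl operator `Δ_A = Σ_{i∈A} T_i²`. -/
def lapD (μ : Fin n → ℝ) (A : Finset (Fin n)) : Module.End ℝ (MvPolynomial (Fin n) ℝ) :=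
  ∑ i ∈ A, dunklT μ i ^ 2

/-- Multiplication by `‖x_A‖² = Σ_{i∈A} x_i²`. -/
def mulX2 (A : Finset (Fin n)) : Module.End ℝ (MvPolynomial (Fin n) ℝ) :=
  LinearMap.mulLeft ℝ (∑ i ∈ A, X i ^ 2)

/-- The Euler operator `E_A = Σ_{i∈A} x_i ∂_i`. -/
def eulerOp (A : Finset (Fin n)) : Module.End ℝ (MvPolynomial (Fin n) ℝ) :=
  ∑ i ∈ A, LinearMap.mulLeft ℝ (X i) * (pderiv i).toLinearMap

/-- `γ_A = |A|/2 + Σ_{i∈A} μ_i`. -/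
def gamA (μ : Fin n → ℝ) (A : Finset (Fin n)) : ℝ :=
  (A.card : ℝ) / 2 + ∑ i ∈ A, μ i

/-- The Casimir operator `C_A`. -/
def casOp (μ : Fin n → ℝ) (A : Finset (Fin n)) : Module.End ℝ (MvPolynomial (Fin n) ℝ) :=
  (1 / 4 : ℝ) • ((eulerOp A + gamA μ A • 1) ^ 2 - (2 : ℝ) • (eulerOp A + gamA μ A • 1)
    - mulX2 A * lapD μ A)

end

/-!
On a monomial `x^m`, `T_i` lowers the `x_i`-degree by one and multiplies by
`k + μ_i (1 - (-1)^k)`, `k = m_i`; so `T_i²` lowers it by two with a coefficient `b(k)`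
satisfying `b(k + 2) - b(k) = 4k + 2 + 4μ_i`. Since `x_i ∂_i` and `x_i²` act diagonally and by a
shift, operators attached to different indices commute, and for a single index
`[x_i ∂_i, T_i²] = -2 T_i²`, `[T_i², x_i²] = 4 x_i ∂_i + 2 + 4μ_i`. Summing over `A`, the operators
`H = E_A + γ_A`, `D = Δ_A`, `F = ‖x_A‖²` satisfy the `sl₂` relations `[H, D] = -2D`,
`[D, F] = 4H`, which force `4 C_A = H² - 2H - FD` to commute with `D`. Finally
`Δ_{[n]} = Δ_A + Σ_{j ∉ A} T_j²`, and each `T_j²` with `j ∉ A` commutes with every ingredient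
of `C_A`.
-/

theorem MvPolynomial.linearMap_ext_monomial_one {σ R M : Type*} [CommSemiring R]
    [AddCommMonoid M] [Module R M] {f g : MvPolynomial σ R →ₗ[R] M}
    (h : ∀ m, f (monomial m 1) = g (monomial m 1)) : f = g :=
  linearMap_ext fun m => LinearMap.ext_ring (h m)

theorem Finset.sum_commutator_sum_of_commute {ι R : Type*} [Ring R] (s : Finset ι) (a b : ι → R)
    (h : ∀ i ∈ s, ∀ j ∈ s, i ≠ j → Commute (a i) (b j)) :
    (∑ i ∈ s, a i) * (∑ j ∈ s, b j) - (∑ j ∈ s, b j) * (∑ i ∈ s, a i)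
      = ∑ i ∈ s, (a i * b i - b i * a i) := by
  calc (∑ i ∈ s, a i) * (∑ j ∈ s, b j) - (∑ j ∈ s, b j) * (∑ i ∈ s, a i)
      = ∑ i ∈ s, ∑ j ∈ s, (a i * b j - b j * a i) := by
        simp only [sum_mul, mul_sum, sum_sub_distrib]
        exact congrArg (· - _) sum_comm
    _ = ∑ i ∈ s, (a i * b i - b i * a i) := by
        refine sum_congr rfl fun i hi => sum_eq_single_of_mem i hi fun j hj hji => ?_
        rw [(h i hi j hj hji.symm).eq, sub_self]

theorem commute_casimir_of_sl2_relations {k R : Type*} [CommRing k] [Ring R] [Algebra k R]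
    {H D F : R} (hHD : H * D - D * H = -(2 : k) • D) (hDF : D * F - F * D = (4 : k) • H) :
    Commute (H ^ 2 - (2 : k) • H - F * D) D := by
  simp only [Algebra.smul_def, map_neg, map_ofNat] at *
  rw [commute_iff_eq, ← sub_eq_zero]
  calc (H ^ 2 - 2 * H - F * D) * D - D * (H ^ 2 - 2 * H - F * D)
      = H * (H * D - D * H) + (H * D - D * H) * H - 2 * (H * D - D * H)
          + (D * F - F * D) * D := by
        noncomm_ring
    _ = H * (-2 * D) + (-2 * D) * H - 2 * (-2 * D) + 4 * H * D := by
        rw [hHD, hDF, mul_assoc]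
    _ = 2 * (H * D - D * H) + 4 * D := by noncomm_ring
    _ = 0 := by rw [hHD]; noncomm_ring

def dunklCoeff (μ : ℝ) (k : ℕ) : ℝ := k + μ * (1 - (-1) ^ k)

-- `k - 1` truncates at `k = 0`, where the factor `dunklCoeff μ 0` vanishes anyway.
def dunklSqCoeff (μ : ℝ) (k : ℕ) : ℝ := dunklCoeff μ k * dunklCoeff μ (k - 1)

@[simp]
theorem dunklCoeff_zero (μ : ℝ) : dunklCoeff μ 0 = 0 := by simp [dunklCoeff]

theorem dunklCoeff_add_two (μ : ℝ) (k : ℕ) : dunklCoeff μ (k + 2) = dunklCoeff μ k + 2 := by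
  simp only [dunklCoeff, pow_add]
  push_cast
  ring

theorem dunklCoeff_add_one_add (μ : ℝ) (k : ℕ) :
    dunklCoeff μ (k + 1) + dunklCoeff μ k = 2 * k + 1 + 2 * μ := by
  simp only [dunklCoeff, pow_succ]
  push_cast
  ring

theorem dunklSqCoeff_of_lt_two (μ : ℝ) {k : ℕ} (hk : k < 2) : dunklSqCoeff μ k = 0 := by
  interval_cases k <;> simp [dunklSqCoeff]

theorem dunklSqCoeff_add_two (μ : ℝ) (k : ℕ) :
    dunklSqCoeff μ (k + 2) = dunklSqCoeff μ k + 4 * k + 2 + 4 * μ := by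
  rcases k with _ | k
  · norm_num [dunklSqCoeff, dunklCoeff]
    ring
  · simp only [dunklSqCoeff, Nat.add_sub_cancel, show k + 1 + 2 - 1 = k + 2 from rfl,
      dunklCoeff_add_two]
    push_cast
    linear_combination 2 * dunklCoeff_add_one_add μ k

noncomputable section

variable {n : ℕ}

def eulerTerm (i : Fin n) : Module.End ℝ (MvPolynomial (Fin n) ℝ) :=
  LinearMap.mulLeft ℝ (X i) * (pderiv i).toLinearMap

def mulXSq (i : Fin n) : Module.End ℝ (MvPolynomial (Fin n) ℝ) :=
  LinearMap.mulLeft ℝ (X i ^ 2)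

theorem eulerOp_eq_sum (A : Finset (Fin n)) : eulerOp A = ∑ i ∈ A, eulerTerm i := rfl

theorem mulX2_eq_sum (A : Finset (Fin n)) : mulX2 A = ∑ i ∈ A, mulXSq i :=
  map_sum (LinearMap.mul ℝ (MvPolynomial (Fin n) ℝ)) _ A

theorem reflOp_monomial (i : Fin n) (m : Fin n →₀ ℕ) :
    reflOp i (monomial m 1) = ((-1 : ℝ) ^ m i) • monomial m 1 := by
  have hX : ∀ j, (if j = i then -X i else X j : MvPolynomial (Fin n) ℝ)
      = (if j = i then -1 else 1) * X j := by
    intro j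
    split_ifs with h <;> simp [h]
  rw [reflOp, AlgHom.toLinearMap_apply, aeval_monomial, map_one, one_mul, Finsupp.prod_pow]
  simp_rw [hX, mul_pow, prod_mul_distrib, ite_pow, one_pow, prod_ite_eq', ← Finsupp.prod_pow]
  simp [monomial_eq, smul_eq_C_mul]

theorem divXop_monomial_of_ne_zero (i : Fin n) {m : Fin n →₀ ℕ} (hm : m i ≠ 0) (a : ℝ) :
    divXop i (monomial m a) = monomial (m - Finsupp.single i 1) a := by
  have hsplit : monomial m a = X i * monomial (m - Finsupp.single i 1) a := by
    rw [X, monomial_mul, one_mul, add_tsub_cancel_of_le]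
    exact Finsupp.single_le_iff.mpr (Nat.one_le_iff_ne_zero.mpr hm)
  rw [hsplit]
  exact X_mul_divMonomial _ _

theorem eulerTerm_monomial (i : Fin n) (m : Fin n →₀ ℕ) :
    eulerTerm i (monomial m 1) = (m i : ℝ) • monomial m 1 := by
  rw [eulerTerm, Module.End.mul_apply, Derivation.coeFn_coe, pderiv_monomial, one_mul,
    LinearMap.mulLeft_apply]
  by_cases hm : m i = 0
  · simp [hm]
  · rw [X, monomial_mul, one_mul, add_tsub_cancel_of_le, smul_monomial, smul_eq_mul, mul_one]
    exact Finsupp.single_le_iff.mpr (Nat.one_le_iff_ne_zero.mpr hm)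

theorem mulXSq_monomial (i : Fin n) (m : Fin n →₀ ℕ) :
    mulXSq i (monomial m 1) = monomial (m + Finsupp.single i 2) 1 := by
  rw [mulXSq, LinearMap.mulLeft_apply, X_pow_eq_monomial, monomial_mul, one_mul, add_comm]

variable (μ : Fin n → ℝ)

theorem dunklT_monomial (i : Fin n) (m : Fin n →₀ ℕ) :
    dunklT μ i (monomial m 1)
      = dunklCoeff (μ i) (m i) • monomial (m - Finsupp.single i 1) 1 := by
  have hrefl : (1 - reflOp i) (monomial m 1) = monomial m (1 - (-1) ^ m i) := by
    rw [LinearMap.sub_apply, Module.End.one_apply, reflOp_monomial, smul_monomial, ← map_sub,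
      smul_eq_mul, mul_one]
  rw [dunklT, LinearMap.add_apply, LinearMap.smul_apply, Module.End.mul_apply, hrefl]
  by_cases hm : m i = 0
  · simp [hm]
  · rw [divXop_monomial_of_ne_zero i hm, Derivation.coeFn_coe, pderiv_monomial, smul_monomial,
      smul_monomial, ← map_add, dunklCoeff, smul_eq_mul, smul_eq_mul, mul_one, one_mul, add_comm]

theorem dunklT_sq_monomial (i : Fin n) (m : Fin n →₀ ℕ) :
    (dunklT μ i ^ 2) (monomial m 1)
      = dunklSqCoeff (μ i) (m i) • monomial (m - Finsupp.single i 2) 1 := by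
  rw [pow_two, Module.End.mul_apply, dunklT_monomial, map_smul, dunklT_monomial, smul_smul,
    Finsupp.tsub_apply, Finsupp.single_eq_same, tsub_tsub, ← Finsupp.single_add, dunklSqCoeff]

theorem commute_dunklT_sq_dunklT_sq {i j : Fin n} (hij : i ≠ j) :
    Commute (dunklT μ i ^ 2) (dunklT μ j ^ 2) := by
  refine linearMap_ext_monomial_one fun m => ?_
  simp only [Module.End.mul_apply, dunklT_sq_monomial, map_smul, smul_smul, Finsupp.tsub_apply,
    Finsupp.single_eq_of_ne hij, Finsupp.single_eq_of_ne hij.symm, tsub_zero, tsub_tsub,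
    add_comm, mul_comm]

theorem commute_dunklT_sq_eulerTerm {i j : Fin n} (hij : i ≠ j) :
    Commute (dunklT μ i ^ 2) (eulerTerm j) := by
  refine linearMap_ext_monomial_one fun m => ?_
  simp only [Module.End.mul_apply, dunklT_sq_monomial, eulerTerm_monomial, map_smul, smul_smul,
    Finsupp.tsub_apply, Finsupp.single_eq_of_ne' hij, tsub_zero, mul_comm]

theorem commute_dunklT_sq_mulXSq {i j : Fin n} (hij : i ≠ j) :
    Commute (dunklT μ i ^ 2) (mulXSq j) := by
  refine linearMap_ext_monomial_one fun m => ?_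
  have hshift : m + Finsupp.single j 2 - Finsupp.single i 2
      = m - Finsupp.single i 2 + Finsupp.single j 2 := by
    ext k
    simp only [Finsupp.add_apply, Finsupp.tsub_apply, Finsupp.single_apply]
    split_ifs <;> omega
  simp only [Module.End.mul_apply, dunklT_sq_monomial, mulXSq_monomial, map_smul,
    Finsupp.add_apply, Finsupp.single_eq_of_ne hij, add_zero, hshift]

theorem eulerTerm_dunklT_sq_monomial (i : Fin n) (m : Fin n →₀ ℕ) :
    (eulerTerm i * dunklT μ i ^ 2) (monomial m 1)
      = (dunklSqCoeff (μ i) (m i) * (m i - 2)) • monomial (m - Finsupp.single i 2) 1 := by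
  rw [Module.End.mul_apply, dunklT_sq_monomial, map_smul, eulerTerm_monomial, smul_smul,
    Finsupp.tsub_apply, Finsupp.single_eq_same]
  rcases lt_or_ge (m i) 2 with hm | hm
  · simp [dunklSqCoeff_of_lt_two _ hm]
  · rw [Nat.cast_sub hm, Nat.cast_ofNat]

theorem mulXSq_dunklT_sq_monomial (i : Fin n) (m : Fin n →₀ ℕ) :
    (mulXSq i * dunklT μ i ^ 2) (monomial m 1) = dunklSqCoeff (μ i) (m i) • monomial m 1 := by
  rw [Module.End.mul_apply, dunklT_sq_monomial, map_smul, mulXSq_monomial]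
  rcases lt_or_ge (m i) 2 with hm | hm
  · simp [dunklSqCoeff_of_lt_two _ hm]
  · rw [tsub_add_cancel_of_le (Finsupp.single_le_iff.mpr hm)]

theorem eulerTerm_commutator_dunklT_sq (i : Fin n) :
    eulerTerm i * dunklT μ i ^ 2 - dunklT μ i ^ 2 * eulerTerm i = -(2 : ℝ) • dunklT μ i ^ 2 := by
  refine linearMap_ext_monomial_one fun m => ?_
  rw [LinearMap.sub_apply, eulerTerm_dunklT_sq_monomial, Module.End.mul_apply, eulerTerm_monomial,
    map_smul, LinearMap.smul_apply, dunklT_sq_monomial, smul_smul, smul_smul, ← sub_smul]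
  ring_nf

theorem dunklT_sq_commutator_mulXSq (i : Fin n) :
    dunklT μ i ^ 2 * mulXSq i - mulXSq i * dunklT μ i ^ 2
      = (4 : ℝ) • eulerTerm i + (2 + 4 * μ i) • 1 := by
  refine linearMap_ext_monomial_one fun m => ?_
  rw [LinearMap.sub_apply, mulXSq_dunklT_sq_monomial, Module.End.mul_apply, mulXSq_monomial,
    dunklT_sq_monomial, Finsupp.add_apply, Finsupp.single_eq_same, add_tsub_cancel_right,
    dunklSqCoeff_add_two, LinearMap.add_apply, LinearMap.smul_apply, LinearMap.smul_apply,
    eulerTerm_monomial, Module.End.one_apply, smul_smul, ← sub_smul, ← add_smul]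
  ring_nf

theorem eulerOp_commutator_lapD (A : Finset (Fin n)) :
    eulerOp A * lapD μ A - lapD μ A * eulerOp A = -(2 : ℝ) • lapD μ A := by
  rw [eulerOp_eq_sum, lapD, sum_commutator_sum_of_commute, smul_sum]
  · exact sum_congr rfl fun i _ => eulerTerm_commutator_dunklT_sq μ i
  · exact fun i _ j _ hij => (commute_dunklT_sq_eulerTerm μ hij.symm).symm

theorem lapD_commutator_mulX2 (A : Finset (Fin n)) :
    lapD μ A * mulX2 A - mulX2 A * lapD μ A = (4 : ℝ) • (eulerOp A + gamA μ A • 1) := by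
  rw [lapD, mulX2_eq_sum, sum_commutator_sum_of_commute]
  · rw [sum_congr rfl fun i _ => dunklT_sq_commutator_mulXSq μ i, sum_add_distrib, ← smul_sum,
      ← sum_smul, ← eulerOp_eq_sum, smul_add, smul_smul, gamA, sum_add_distrib, sum_const,
      ← mul_sum, nsmul_eq_mul]
    congr 2
    ring
  · exact fun i _ j _ hij => commute_dunklT_sq_mulXSq μ hij

theorem commute_casOp_lapD (A : Finset (Fin n)) : Commute (casOp μ A) (lapD μ A) := by
  have hHD : (eulerOp A + gamA μ A • 1) * lapD μ A - lapD μ A * (eulerOp A + gamA μ A • 1)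
      = -(2 : ℝ) • lapD μ A := by
    rw [← eulerOp_commutator_lapD, add_mul, mul_add, smul_mul_assoc, mul_smul_comm, one_mul,
      mul_one]
    abel
  exact (commute_casimir_of_sl2_relations hHD (lapD_commutator_mulX2 μ A)).smul_left _

theorem commute_casOp_dunklT_sq_of_notMem {A : Finset (Fin n)} {j : Fin n} (hj : j ∉ A) :
    Commute (casOp μ A) (dunklT μ j ^ 2) := by
  have hne : ∀ i ∈ A, j ≠ i := fun i hi hji => hj (hji ▸ hi)
  have hE : Commute (dunklT μ j ^ 2) (eulerOp A) :=
    Commute.sum_right _ _ _ fun i hi => commute_dunklT_sq_eulerTerm μ (hne i hi)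
  have hF : Commute (dunklT μ j ^ 2) (mulX2 A) := by
    rw [mulX2_eq_sum]
    exact Commute.sum_right _ _ _ fun i hi => commute_dunklT_sq_mulXSq μ (hne i hi)
  have hD : Commute (dunklT μ j ^ 2) (lapD μ A) :=
    Commute.sum_right _ _ _ fun i hi => commute_dunklT_sq_dunklT_sq μ (hne i hi)
  have hH : Commute (dunklT μ j ^ 2) (eulerOp A + gamA μ A • 1) :=
    hE.add_right ((Commute.one_right _).smul_right _)
  exact ((((hH.pow_right 2).sub_right (hH.smul_right _)).sub_right (hF.mul_right hD)).smul_right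
    _).symm

end

theorem casOp_comm_lapD_univ_general {n : ℕ} (μ : Fin n → ℝ)
    (A : Finset (Fin n)) :
    casOp μ A * lapD μ Finset.univ - lapD μ Finset.univ * casOp μ A = 0 := by
  have hsplit : lapD μ Finset.univ = lapD μ A + lapD μ Aᶜ := (sum_add_sum_compl A _).symm
  have hcomm : Commute (casOp μ A) (lapD μ Finset.univ) := by
    rw [hsplit]
    exact (commute_casOp_lapD μ A).add_right <| Commute.sum_right _ _ _ fun j hj =>
      commute_casOp_dunklT_sq_of_notMem μ (mem_compl.mp hj)
  exact sub_eq_zero.mpr hcomm.eq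

/-- the Casimir operator `C_A` commutes with the full Laplace–Dunkl
operator `Δ_{[n]}`. -/
theorem casOp_comm_lapD_univ {n : ℕ} (hn : 1 ≤ n) (μ : Fin n → ℝ) (hμ : ∀ i, 0 < μ i)
    (A : Finset (Fin n)) :
    casOp μ A * lapD μ Finset.univ - lapD μ Finset.univ * casOp μ A = 0 :=
  casOp_comm_lapD_univ_general μ A
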